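/- arXiv:2505.08908 — 2 statements merged into one kernel-verified Lean document; each statement's English description precedes it below -/
import Mathlib

section
/- (Proposition 1, part 1: uniqueness.) Let K = 2 and let ℓ be an additive counterfactual loss with weights ω and intercept ϖ. Suppose ℓ̃s : Fin 2 → Fin M → ℝ is a standard loss such that for every pair of pmfs p₁, p₂ on (Fin 2) × (Fin 2 → Fin M) with the same marginal on potential-outcome vectors, R(p₁; ℓ) − Rstd(p₁; ℓ̃s) = R(p₂; ℓ) − Rstd(p₂; ℓ̃s). Then there exists a constant c ∈ ℝ such that ℓ̃s(d, m) = ω d d m − ω d (1−d) m + c for all d ∈ Fin 2 and m ∈ Fin M. -/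
/-- The counterfactual risk `R(p; ℓ) = Σ_{(d,y)} ℓ d y · p(d,y)`. -/
def cfRisk (M : ℕ) (p : Fin 2 × (Fin 2 → Fin M) → ℝ)
    (ℓ : Fin 2 → (Fin 2 → Fin M) → ℝ) : ℝ :=
  ∑ d : Fin 2, ∑ y : Fin 2 → Fin M, ℓ d y * p (d, y)

/-- The standard risk `Rstd(p; ℓs) = Σ_{(d,y)} ℓs d (y d) · p(d,y)`. -/
def stdRisk (M : ℕ) (p : Fin 2 × (Fin 2 → Fin M) → ℝ)
    (ℓs : Fin 2 → Fin M → ℝ) : ℝ :=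
  ∑ d : Fin 2, ∑ y : Fin 2 → Fin M, ℓs d (y d) * p (d, y)

/-- Proposition 1, part 1: uniqueness. With binary decisions (`K = 2`) and an
additive counterfactual loss `ℓ` with weights `ω` and intercept `ϖ`, if a standard loss `ℓ̃s`
is such that the risk difference `R(p; ℓ) − Rstd(p; ℓ̃s)` agrees across any two pmfs with the
same marginal on potential-outcome vectors, then `ℓ̃s(d, m) = ω d d m − ω d (1−d) m + c` for
some constant `c`. -/
theorem stmt_7 (M : ℕ) (hM : 2 ≤ M)
    (ℓ : Fin 2 → (Fin 2 → Fin M) → ℝ)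
    (ω : Fin 2 → Fin 2 → Fin M → ℝ)
    (ϖ : (Fin 2 → Fin M) → ℝ)
    (hadd : ∀ (d : Fin 2) (y : Fin 2 → Fin M), ℓ d y = (∑ k : Fin 2, ω k d (y k)) + ϖ y)
    (ℓts : Fin 2 → Fin M → ℝ)
    (huniq : ∀ p₁ p₂ : Fin 2 × (Fin 2 → Fin M) → ℝ,
      (∀ z, 0 ≤ p₁ z) → (∑ z, p₁ z = 1) →
      (∀ z, 0 ≤ p₂ z) → (∑ z, p₂ z = 1) →
      (∀ y : Fin 2 → Fin M, ∑ d : Fin 2, p₁ (d, y) = ∑ d : Fin 2, p₂ (d, y)) →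
      cfRisk M p₁ ℓ - stdRisk M p₁ ℓts = cfRisk M p₂ ℓ - stdRisk M p₂ ℓts) :
    ∃ c : ℝ, ∀ (d : Fin 2) (m : Fin M), ℓts d m = ω d d m - ω d (1 - d) m + c := by
  -- point-mass pmfs
  set δ : Fin 2 → (Fin 2 → Fin M) → (Fin 2 × (Fin 2 → Fin M) → ℝ) :=
    fun d y z => if z = (d, y) then 1 else 0 with hδ
  have hnonneg : ∀ d y z, 0 ≤ δ d y z := by
    intro d y z; simp only [hδ]; positivity
  have hsum : ∀ d y, ∑ z, δ d y z = 1 := by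
    intro d y; simp [hδ]
  have hcf : ∀ d y, cfRisk M (δ d y) ℓ = ℓ d y := by
    intro d y
    fin_cases d <;>
      simp [cfRisk, hδ, Prod.ext_iff, mul_ite, Fin.sum_univ_two, Finset.sum_ite_eq']
  have hstd : ∀ d y, stdRisk M (δ d y) ℓts = ℓts d (y d) := by
    intro d y
    fin_cases d <;>
      simp [stdRisk, hδ, Prod.ext_iff, mul_ite, Fin.sum_univ_two, Finset.sum_ite_eq']
  have key : ∀ y : Fin 2 → Fin M,
      ℓ 0 y - ℓts 0 (y 0) = ℓ 1 y - ℓts 1 (y 1) := by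
    intro y
    have hm : ∀ y' : Fin 2 → Fin M,
        ∑ d : Fin 2, δ 0 y (d, y') = ∑ d : Fin 2, δ 1 y (d, y') := by
      intro y'
      by_cases h : y' = y <;> simp [hδ, Prod.ext_iff, Fin.sum_univ_two, h]
    have := huniq (δ 0 y) (δ 1 y) (hnonneg 0 y) (hsum 0 y) (hnonneg 1 y) (hsum 1 y) hm
    rwa [hcf, hcf, hstd, hstd] at this
  -- specialize via y = ![m, n]
  have key2 : ∀ m n : Fin M,
      ω 0 0 m + ω 1 0 n - ℓts 0 m = ω 0 1 m + ω 1 1 n - ℓts 1 n := by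
    intro m n
    have := key ![m, n]
    rw [hadd, hadd] at this
    simp [Fin.sum_univ_two] at this
    linarith
  have m0 : Fin M := ⟨0, by omega⟩
  refine ⟨ℓts 1 m0 - (ω 1 1 m0 - ω 1 0 m0), ?_⟩
  intro d m
  fin_cases d
  · have := key2 m m0
    simp only [Fin.isValue]
    norm_num
    linarith
  · have h1 := key2 m0 m
    have h2 := key2 m0 m0
    simp only [Fin.isValue]
    norm_num
    linarith
end

section
/- (Same treatment recommendations in the binary case.) Let K = 2, let ℓ be an additive counterfactual loss with weights ω and intercept ϖ, and define the standard loss ℓs(d, m) = ω d d m − ω d (1−d) m. Then for any two pmfs p₁, p₂ on (Fin 2) × (Fin 2 → Fin M) with the same marginal on potential-outcome vectors, R(p₁; ℓ) ≤ R(p₂; ℓ) if and only if Rstd(p₁; ℓs) ≤ Rstd(p₂; ℓs). -/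
/-- Same treatment recommendations in the binary case. With `K = 2`, an additive
counterfactual loss `ℓ` with weights `ω` and intercept `ϖ`, and the standard loss
`ℓs(d, m) = ω d d m − ω d (1−d) m`, for any two pmfs `p₁, p₂` with the same marginal on
potential-outcome vectors: `R(p₁; ℓ) ≤ R(p₂; ℓ) ↔ Rstd(p₁; ℓs) ≤ Rstd(p₂; ℓs)`. -/
theorem stmt_8 (M : ℕ) (hM : 2 ≤ M)
    (ℓ : Fin 2 → (Fin 2 → Fin M) → ℝ)
    (ω : Fin 2 → Fin 2 → Fin M → ℝ)
    (ϖ : (Fin 2 → Fin M) → ℝ)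
    (hadd : ∀ (d : Fin 2) (y : Fin 2 → Fin M), ℓ d y = (∑ k : Fin 2, ω k d (y k)) + ϖ y)
    (ℓs : Fin 2 → Fin M → ℝ)
    (hℓs : ∀ (d : Fin 2) (m : Fin M), ℓs d m = ω d d m - ω d (1 - d) m)
    (p₁ p₂ : Fin 2 × (Fin 2 → Fin M) → ℝ)
    (hnn₁ : ∀ z, 0 ≤ p₁ z) (hsum₁ : ∑ z, p₁ z = 1)
    (hnn₂ : ∀ z, 0 ≤ p₂ z) (hsum₂ : ∑ z, p₂ z = 1)
    (hmarg : ∀ y : Fin 2 → Fin M, ∑ d : Fin 2, p₁ (d, y) = ∑ d : Fin 2, p₂ (d, y)) :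
    cfRisk M p₁ ℓ ≤ cfRisk M p₂ ℓ ↔ stdRisk M p₁ ℓs ≤ stdRisk M p₂ ℓs := by
  have h10 : (1 - (0 : Fin 2)) = 1 := rfl
  have h11 : (1 - (1 : Fin 2)) = 0 := rfl
  have key : ∀ p : Fin 2 × (Fin 2 → Fin M) → ℝ,
      cfRisk M p ℓ = stdRisk M p ℓs
        + ∑ y : Fin 2 → Fin M,
            (ω 0 1 (y 0) + ω 1 0 (y 1) + ϖ y) * ∑ d : Fin 2, p (d, y) := by
    intro p
    simp only [cfRisk, stdRisk, Fin.sum_univ_two, hadd, hℓs, h10, h11,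
      ← Finset.sum_add_distrib]
    apply Finset.sum_congr rfl
    intro y _
    ring
  have C : ∑ y : Fin 2 → Fin M,
        (ω 0 1 (y 0) + ω 1 0 (y 1) + ϖ y) * ∑ d : Fin 2, p₁ (d, y)
      = ∑ y : Fin 2 → Fin M,
        (ω 0 1 (y 0) + ω 1 0 (y 1) + ϖ y) * ∑ d : Fin 2, p₂ (d, y) := by
    apply Finset.sum_congr rfl
    intro y _
    rw [hmarg y]
  rw [key p₁, key p₂, C, add_le_add_iff_right]
end
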